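/- arXiv:2105.05398 — 10 statements merged into one kernel-verified Lean document; each statement's English description precedes it below -/
import Mathlib

section
/- The abstraction function α is bitwise exact: for a nonempty finite set C of n-bit values and any bit position k, the mask bit of α(C) at position k is 1 if and only if there exist x, y ∈ C with bit k of x equal to 0 and bit k of y equal to 1; and if the mask bit at k is 0 then the value bit of α(C) at k equals bit k of x for every x ∈ C. -/
/-- A tnum is a pair (value, mask) of n-bit bitvectors. -/
abbrev Tnum (n : ℕ) := BitVec n × BitVec n

/-- A tnum is well-formed if no bit is both a known-1 and unknown. -/
def Tnum.wf {n : ℕ} (P : Tnum n) : Prop := P.1 &&& P.2 = 0#n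

/-- Concretization of a tnum. -/
def Tnum.gamma {n : ℕ} (P : Tnum n) : Set (BitVec n) := { x | x &&& ~~~P.2 = P.1 }
/-- Bitwise-and of all elements of a finite set. -/
def alphaAnd {n : ℕ} (C : Finset (BitVec n)) : BitVec n := C.fold (· &&& ·) (BitVec.allOnes n) id

/-- Bitwise-or of all elements of a finite set. -/
def alphaOr {n : ℕ} (C : Finset (BitVec n)) : BitVec n := C.fold (· ||| ·) (0#n) id

/-- The tnum abstraction function. -/
def alpha {n : ℕ} (C : Finset (BitVec n)) : Tnum n := (alphaAnd C, alphaAnd C ^^^ alphaOr C)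


private lemma andBit {n : ℕ} (C : Finset (BitVec n)) (k : ℕ) (hk : k < n) :
    (alphaAnd C).getLsbD k = true ↔ ∀ x ∈ C, x.getLsbD k = true := by
  classical
  induction C using Finset.induction with
  | empty => simp [alphaAnd, hk]
  | insert a s h ih =>
    rw [alphaAnd, Finset.fold_insert h]
    simp_all [alphaAnd]

private lemma orBit {n : ℕ} (C : Finset (BitVec n)) (k : ℕ) :
    (alphaOr C).getLsbD k = true ↔ ∃ x ∈ C, x.getLsbD k = true := by
  classical
  induction C using Finset.induction with
  | empty => simp [alphaOr]
  | insert a s h ih =>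
    rw [alphaOr, Finset.fold_insert h]
    simp_all [alphaOr]

theorem stmt4 {n : ℕ} (C : Finset (BitVec n)) (hC : C.Nonempty) (k : ℕ) (hk : k < n) :
    ((alpha C).2.getLsbD k = true ↔
      ∃ x ∈ C, ∃ y ∈ C, x.getLsbD k = false ∧ y.getLsbD k = true) ∧
    ((alpha C).2.getLsbD k = false →
      ∀ x ∈ C, (alpha C).1.getLsbD k = x.getLsbD k) := by
  constructor
  · simp only [alpha, BitVec.getLsbD_xor]
    constructor
    · intro hx
      rcases hb : (alphaOr C).getLsbD k with _ | _
      · -- or bit false, so and bit true, contradiction since nonempty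
        exfalso
        obtain ⟨x, hx'⟩ := hC
        have ha : (alphaAnd C).getLsbD k = true := by
          simpa [hb] using hx
        have := (andBit C k hk).mp ha x hx'
        have : (alphaOr C).getLsbD k = true := (orBit C k).mpr ⟨x, hx', this⟩
        simp [this] at hb
      · have ha : (alphaAnd C).getLsbD k = false := by
          simpa [hb] using hx
        obtain ⟨y, hy, hyk⟩ := (orBit C k).mp hb
        have : ¬ ∀ x ∈ C, x.getLsbD k = true := by
          intro hall
          have := (andBit C k hk).mpr hall
          simp [this] at ha
        push_neg at this
        obtain ⟨x, hx', hxk⟩ := this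
        exact ⟨x, hx', y, hy, Bool.not_eq_true _ ▸ by simpa using hxk, hyk⟩
    · rintro ⟨x, hx, y, hy, hxk, hyk⟩
      have ho : (alphaOr C).getLsbD k = true := (orBit C k).mpr ⟨y, hy, hyk⟩
      have ha : (alphaAnd C).getLsbD k = false := by
        by_contra h
        have := (andBit C k hk).mp (by simpa using h) x hx
        simp [this] at hxk
      simp [ha, ho]
  · intro hm x hx
    simp only [alpha, BitVec.getLsbD_xor] at hm ⊢
    have heq : (alphaAnd C).getLsbD k = (alphaOr C).getLsbD k := by
      revert hm; cases (alphaAnd C).getLsbD k <;> cases (alphaOr C).getLsbD k <;> simp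
    rcases ho : (alphaOr C).getLsbD k with _ | _
    · have hxk : x.getLsbD k = false := by
        by_contra h
        have := (orBit C k).mpr ⟨x, hx, by simpa using h⟩
        simp [this] at ho
      rw [heq, ho, hxk]
    · have ha : (alphaAnd C).getLsbD k = true := heq.trans ho
      rw [ha, (andBit C k hk).mp ha x hx]
end

section
/- α and γ form a Galois connection: for any nonempty finite set C of n-bit values and any well-formed tnum P, C ⊆ γ(P) if and only if α(C) ⊑ P in the tnum order. -/
/-- The tnum abstract order. -/
def Tnum.le {n : ℕ} (P Q : Tnum n) : Prop := (P.2 ||| Q.2 = Q.2) ∧ (P.1 &&& ~~~Q.2 = Q.1)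

open Classical in
lemma alphaAnd_getLsbD {n : ℕ} (C : Finset (BitVec n)) (i : ℕ) :
    (alphaAnd C).getLsbD i = (decide (i < n) && decide (∀ x ∈ C, x.getLsbD i = true)) := by
  classical
  induction C using Finset.induction_on with
  | empty => simp [alphaAnd]
  | @insert a s hx ih =>
    simp only [alphaAnd, Finset.fold_insert hx] at *
    simp only [BitVec.getLsbD_and, ih, Finset.mem_insert]
    by_cases h : i < n
    · by_cases ha : a.getLsbD i <;> simp [h, ha]
    · simp [h]

open Classical in
lemma alphaOr_getLsbD {n : ℕ} (C : Finset (BitVec n)) (i : ℕ) :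
    (alphaOr C).getLsbD i = decide (∃ x ∈ C, x.getLsbD i = true) := by
  classical
  induction C using Finset.induction_on with
  | empty => simp [alphaOr]
  | @insert a s hx ih =>
    simp only [alphaOr, Finset.fold_insert hx] at *
    simp only [BitVec.getLsbD_or, ih, Finset.mem_insert]
    by_cases ha : a.getLsbD i <;> simp [ha]

theorem stmt5 {n : ℕ} (C : Finset (BitVec n)) (hC : C.Nonempty)
    (P : Tnum n) (hP : Tnum.wf P) :
    (∀ x ∈ C, x ∈ Tnum.gamma P) ↔ Tnum.le (alpha C) P := by
  obtain ⟨v, m⟩ := P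
  obtain ⟨x0, hx0⟩ := hC
  have hwf : ∀ i, (v.getLsbD i && m.getLsbD i) = false := by
    intro i
    have := congrArg (fun b => b.getLsbD i) hP
    simpa using this
  constructor
  · intro h
    have hbit : ∀ x ∈ C, ∀ i, (x.getLsbD i && !m.getLsbD i) = v.getLsbD i := by
      intro x hx i
      have := congrArg (fun b => b.getLsbD i) (h x hx)
      simp only [BitVec.getLsbD_and, BitVec.getLsbD_not] at this
      by_cases hi : i < n
      · simpa [hi] using this
      · have hvn : v.getLsbD i = false := BitVec.getLsbD_of_ge _ _ (le_of_not_gt hi)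
        have hxn : x.getLsbD i = false := BitVec.getLsbD_of_ge _ _ (le_of_not_gt hi)
        simp [hvn, hxn]
    constructor <;> apply BitVec.eq_of_getLsbD_eq <;> intro i <;> intro hi
    · simp only [alpha, BitVec.getLsbD_or, BitVec.getLsbD_xor, alphaAnd_getLsbD,
        alphaOr_getLsbD, hi, decide_true, Bool.true_and]
      by_cases hm : m.getLsbD i
      · simp [hm]
      · have heq : ∀ x ∈ C, x.getLsbD i = v.getLsbD i := by
          intro x hx
          have := hbit x hx i
          simpa [hm] using this
        have hd : decide (∀ x ∈ C, x.getLsbD (i:ℕ) = true)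
            = decide (∃ x ∈ C, x.getLsbD (i:ℕ) = true) := by
          simp only [decide_eq_decide]
          constructor
          · intro h'
            exact ⟨x0, hx0, h' x0 hx0⟩
          · rintro ⟨y, hy, hyi⟩ x hx
            rw [heq x hx, ← heq y hy, hyi]
        rw [hd, Bool.xor_self]
        simp [hm]
    · simp only [alpha, BitVec.getLsbD_and, BitVec.getLsbD_not, alphaAnd_getLsbD, hi,
        decide_true, Bool.true_and]
      by_cases hm : m.getLsbD i
      · have : v.getLsbD i = false := by have := hwf i; simpa [hm] using this
        simp [hm, this]
      · have heach : ∀ x ∈ C, x.getLsbD i = v.getLsbD i := by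
          intro x hx
          have := hbit x hx i
          simpa [hm] using this
        by_cases hv : v.getLsbD i
        · simp [hm, hv, fun x hx => heach x hx]
          exact fun x hx => by simp [heach x hx, hv]
        · simp [hm, hv]
          exact ⟨x0, hx0, by simp [heach x0 hx0, hv]⟩
  · rintro ⟨h1, h2⟩ x hx
    apply BitVec.eq_of_getLsbD_eq
    intro i
    intro hi
    have e1 := congrArg (fun b => b.getLsbD i) h1
    have e2 := congrArg (fun b => b.getLsbD i) h2
    simp only [alpha, BitVec.getLsbD_or, BitVec.getLsbD_xor, BitVec.getLsbD_and,
      BitVec.getLsbD_not, alphaAnd_getLsbD, alphaOr_getLsbD, hi, decide_true,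
      Bool.true_and] at e1 e2 ⊢
    by_cases hm : m.getLsbD i
    · have hv : v.getLsbD i = false := by have := hwf i; simpa [hm] using this
      simp [hm, hv]
    · simp only [hm, Bool.or_false, Bool.not_false, Bool.and_true] at e1 e2 ⊢
      -- e1 : (decide ∀ ...) ^^ (decide ∃ ...) = false, e2 : decide ∀ ... = v.getLsbD i
      by_cases hall : ∀ y ∈ C, y.getLsbD (i:ℕ) = true
      · rw [hall x hx, ← e2]
        simpa using hall
      · have hallf : decide (∀ y ∈ C, y.getLsbD i = true) = false := by simpa using hall
        rw [hallf] at e1 e2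
        have hex : ¬ ∃ y ∈ C, y.getLsbD i = true := by
          intro hex
          simp [hex] at e1
        have : x.getLsbD i = false := by
          by_contra hc
          exact hex ⟨x, hx, by simpa using hc⟩
        simp [this, ← e2]
end

section
/- Reductivity of the Galois connection: for any well-formed tnum P with nonempty concretization, α(γ(P)) = P. -/
instance {n : ℕ} : Fintype (BitVec n) :=
  Fintype.ofEquiv (Fin (2 ^ n)) ⟨BitVec.ofFin, BitVec.toFin, fun _ => rfl, fun _ => rfl⟩

lemma andLsb {n : ℕ} (C : Finset (BitVec n)) (i : ℕ) (hi : i < n) :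
    (alphaAnd C).getLsbD i = decide (∀ x ∈ C, x.getLsbD i) := by
  classical
  unfold alphaAnd
  induction C using Finset.induction_on with
  | empty => simp [hi]
  | @insert a s h ih => rw [Finset.fold_insert h]; simp_all

lemma orLsb {n : ℕ} (C : Finset (BitVec n)) (i : ℕ) :
    (alphaOr C).getLsbD i = decide (∃ x ∈ C, x.getLsbD i) := by
  classical
  unfold alphaOr
  induction C using Finset.induction_on with
  | empty => simp
  | @insert a s h ih => rw [Finset.fold_insert h]; simp_all

theorem stmt6 {n : ℕ} (P : Tnum n) (hP : Tnum.wf P)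
    (hne : (Tnum.gamma P).Nonempty) :
    alpha (Finset.univ.filter (fun x => x &&& ~~~P.2 = P.1)) = P := by
  classical
  set S := Finset.univ.filter (fun x => x &&& ~~~P.2 = P.1) with hS
  have hmem : ∀ x : BitVec n, x ∈ S ↔ x &&& ~~~P.2 = P.1 := by simp [hS]
  have hwf : ∀ i : Fin n, (P.1.getLsbD i && P.2.getLsbD i) = false := by
    intro i
    have : (P.1 &&& P.2).getLsbD i.1 = (0#n).getLsbD i.1 := by rw [hP]
    simp only [BitVec.getLsbD_and, BitVec.getLsbD_zero] at this
    exact this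
  have hbit : ∀ x ∈ S, ∀ i : Fin n, (x.getLsbD i && !P.2.getLsbD i) = P.1.getLsbD i := by
    intro x hx i
    have h := (hmem x).1 hx
    have h2 : (x &&& ~~~P.2).getLsbD i.1 = P.1.getLsbD i.1 := by rw [h]
    simp only [BitVec.getLsbD_and, BitVec.getLsbD_not, i.isLt, decide_true,
      Bool.true_and] at h2
    exact h2
  have hv : P.1 ∈ S := by
    rw [hmem]
    apply BitVec.eq_of_getLsbD_eq
    intro i' hi'
    obtain ⟨i, rfl⟩ : ∃ j : Fin n, j.1 = i' := ⟨⟨i', hi'⟩, rfl⟩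
    have := hwf i
    simp only [BitVec.getLsbD_and, BitVec.getLsbD_not, i.isLt, decide_true, Bool.true_and]
    cases h1 : P.1.getLsbD i <;> cases h2 : P.2.getLsbD i <;> simp_all
  have hw : P.1 ||| P.2 ∈ S := by
    rw [hmem]
    apply BitVec.eq_of_getLsbD_eq
    intro i' hi'
    obtain ⟨i, rfl⟩ : ∃ j : Fin n, j.1 = i' := ⟨⟨i', hi'⟩, rfl⟩
    have := hwf i
    simp only [BitVec.getLsbD_and, BitVec.getLsbD_or, BitVec.getLsbD_not, i.isLt, decide_true,
      Bool.true_and]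
    cases h1 : P.1.getLsbD i <;> cases h2 : P.2.getLsbD i <;> simp_all
  have hAnd : alphaAnd S = P.1 := by
    apply BitVec.eq_of_getLsbD_eq
    intro i' hi'
    obtain ⟨i, rfl⟩ : ∃ j : Fin n, j.1 = i' := ⟨⟨i', hi'⟩, rfl⟩
    rw [andLsb S i.1 i.isLt]
    by_cases hm : P.2.getLsbD i = true
    · have hv0 : P.1.getLsbD i = false := by have := hwf i; simp_all
      rw [hv0, decide_eq_false_iff_not]
      intro hall
      have := hall P.1 hv
      simp_all
    · simp only [Bool.not_eq_true] at hm
      have hall : ∀ x ∈ S, x.getLsbD i = P.1.getLsbD i := by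
        intro x hx
        have := hbit x hx i
        simp_all
      cases h1 : P.1.getLsbD i
      · rw [decide_eq_false_iff_not]
        intro hcon
        have := hcon P.1 hv
        simp_all
      · rw [decide_eq_true_eq]
        intro x hx
        rw [hall x hx, h1]
  have hXor : alphaAnd S ^^^ alphaOr S = P.2 := by
    apply BitVec.eq_of_getLsbD_eq
    intro i' hi'
    obtain ⟨i, rfl⟩ : ∃ j : Fin n, j.1 = i' := ⟨⟨i', hi'⟩, rfl⟩
    rw [BitVec.getLsbD_xor, hAnd, orLsb S i.1]
    by_cases hm : P.2.getLsbD i = true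
    · have hv0 : P.1.getLsbD i = false := by have := hwf i; simp_all
      have hex : ∃ x ∈ S, x.getLsbD i = true := by
        refine ⟨P.1 ||| P.2, hw, ?_⟩
        simp [BitVec.getLsbD_or, hm]
      simp [hv0, hm, hex, -BitVec.getLsbD_eq_getElem]
    · simp only [Bool.not_eq_true] at hm
      cases h1 : P.1.getLsbD i
      · have hnex : ¬ ∃ x ∈ S, x.getLsbD i = true := by
          rintro ⟨x, hx, hxi⟩
          have := hbit x hx i
          simp_all
        simp [hnex, hm, h1, -BitVec.getLsbD_eq_getElem]
      · have hex : ∃ x ∈ S, x.getLsbD i = true := ⟨P.1, hv, h1⟩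
        simp [hex, hm, h1, -BitVec.getLsbD_eq_getElem]
  exact Prod.ext hAnd hXor
end

section
/- Soundness of tnum_add: let P, Q be well-formed n-bit tnums, and define sv = P.v + Q.v, sm = P.m + Q.m, Σ = sv + sm, χ = Σ ^^^ sv, η = χ ||| P.m ||| Q.m, and R = (sv &&& ~~~η, η). Then for all x ∈ γ(P) and y ∈ γ(Q) (where additions are modular n-bit additions), x + y ∈ γ(R). -/
/-- The Linux kernel's tnum addition. -/
def tnumAdd {n : ℕ} (P Q : Tnum n) : Tnum n :=
  let sv := P.1 + Q.1
  let sm := P.2 + Q.2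
  let sigma := sv + sm
  let chi := sigma ^^^ sv
  let eta := chi ||| P.2 ||| Q.2
  (sv &&& ~~~eta, eta)

theorem nat_add_eq_or' (a : ℕ) : ∀ b : ℕ, a &&& b = 0 → a + b = a ||| b := by
  induction a using Nat.binaryRec with
  | zero => simp
  | bit xa a ih =>
    intro b h
    rw [← Nat.bit_testBit_zero_shiftRight_one b] at *
    rw [Nat.land_bit, Nat.bit_eq_zero_iff] at h
    have h2 := ih _ h.1
    have h3 := h.2
    rw [Nat.lor_bit, Nat.bit_val, Nat.bit_val, Nat.bit_val]
    rcases xa <;> rcases hb : b.testBit 0 <;> rw [hb] at h3 <;> simp at h3 ⊢ <;> omega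

theorem bv_add_eq_or' {n : ℕ} (u v : BitVec n) (h : u &&& v = 0#n) : u + v = u ||| v := by
  have hn : u.toNat &&& v.toNat = 0 := by
    have := congrArg BitVec.toNat h; simpa [BitVec.toNat_and] using this
  apply BitVec.eq_of_toNat_eq
  rw [BitVec.toNat_add, BitVec.toNat_or, ← nat_add_eq_or' _ _ hn, Nat.mod_eq_of_lt]
  rw [nat_add_eq_or' _ _ hn]
  have := (u ||| v).isLt
  rw [BitVec.toNat_or] at this
  exact this

theorem carry_mono' {n : ℕ} (k : ℕ) (u u' w w' : BitVec n)
    (hu : u &&& u' = u) (hw : w &&& w' = w) :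
    BitVec.carry k u w false → BitVec.carry k u' w' false := by
  have key : ∀ (a b : BitVec n), a &&& b = a → a.toNat % 2^k ≤ b.toNat % 2^k := by
    intro a b hab
    rw [← BitVec.toNat_setWidth, ← BitVec.toNat_setWidth]
    have : BitVec.setWidth k a &&& BitVec.setWidth k b = BitVec.setWidth k a := by
      rw [← BitVec.setWidth_and, hab]
    calc (BitVec.setWidth k a).toNat
        = (BitVec.setWidth k a &&& BitVec.setWidth k b).toNat := by rw [this]
      _ ≤ (BitVec.setWidth k b).toNat := by rw [BitVec.toNat_and]; exact Nat.and_le_right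
  have h1 := key u u' hu
  have h2 := key w w' hw
  show decide _ = true → decide _ = true
  simp only [decide_eq_true_eq]
  omega

theorem stmt7 {n : ℕ} (P Q : Tnum n) (hP : Tnum.wf P) (hQ : Tnum.wf Q)
    (x y : BitVec n) (hx : x ∈ Tnum.gamma P) (hy : y ∈ Tnum.gamma Q) :
    x + y ∈ Tnum.gamma (tnumAdd P Q) := by
  obtain ⟨Pv, p⟩ := P
  obtain ⟨Qv, q⟩ := Q
  simp only [Tnum.wf] at hP hQ
  simp only [Tnum.gamma, Set.mem_setOf_eq] at hx hy ⊢
  simp only [tnumAdd]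
  set sv := Pv + Qv with hsv
  set sm := p + q with hsm
  set eta := ((sv + sm) ^^^ sv) ||| p ||| q with heta
  show (x + y) &&& ~~~eta = sv &&& ~~~eta
  -- bitwise hypotheses
  have hxb : ∀ i : Fin n, (x.getLsbD i && !p.getLsbD i) = Pv.getLsbD i := fun i => by
    have := congrArg (fun z => BitVec.getLsbD z i) hx
    simpa [BitVec.getLsbD_and, BitVec.getLsbD_not, i.isLt] using this
  have hyb : ∀ i : Fin n, (y.getLsbD i && !q.getLsbD i) = Qv.getLsbD i := fun i => by
    have := congrArg (fun z => BitVec.getLsbD z i) hy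
    simpa [BitVec.getLsbD_and, BitVec.getLsbD_not, i.isLt] using this
  have hPb : ∀ i : Fin n, (Pv.getLsbD i && p.getLsbD i) = false := fun i => by
    have := congrArg (fun z => BitVec.getLsbD z i) hP
    simpa [BitVec.getLsbD_and] using this
  have hQb : ∀ i : Fin n, (Qv.getLsbD i && q.getLsbD i) = false := fun i => by
    have := congrArg (fun z => BitVec.getLsbD z i) hQ
    simpa [BitVec.getLsbD_and] using this
  -- subset facts
  have s1 : Pv &&& x = Pv := by
    apply BitVec.eq_of_getLsbD_eq; intro i hi
    have h1 := hxb ⟨i, hi⟩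
    simp only [BitVec.getLsbD_and]
    cases hx1 : x.getLsbD i <;> cases hp1 : p.getLsbD i <;> simp_all
  have t1 : Qv &&& y = Qv := by
    apply BitVec.eq_of_getLsbD_eq; intro i hi
    have h1 := hyb ⟨i, hi⟩
    simp only [BitVec.getLsbD_and]
    cases hx1 : y.getLsbD i <;> cases hp1 : q.getLsbD i <;> simp_all
  have s2 : x &&& (Pv ||| p) = x := by
    apply BitVec.eq_of_getLsbD_eq; intro i hi
    have h1 := hxb ⟨i, hi⟩
    simp only [BitVec.getLsbD_and, BitVec.getLsbD_or]
    cases hx1 : x.getLsbD i <;> cases hp1 : p.getLsbD i <;> simp_all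
  have t2 : y &&& (Qv ||| q) = y := by
    apply BitVec.eq_of_getLsbD_eq; intro i hi
    have h1 := hyb ⟨i, hi⟩
    simp only [BitVec.getLsbD_and, BitVec.getLsbD_or]
    cases hx1 : y.getLsbD i <;> cases hp1 : q.getLsbD i <;> simp_all
  have hXY : (Pv ||| p) + (Qv ||| q) = sv + sm := by
    rw [← bv_add_eq_or' Pv p hP, ← bv_add_eq_or' Qv q hQ, hsv, hsm]; ring
  apply BitVec.eq_of_getLsbD_eq
  intro i hi
  simp only [BitVec.getLsbD_and, BitVec.getLsbD_not, hi, decide_true, Bool.true_and]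
  cases hE : eta.getLsbD i
  · -- eta bit is 0
    rw [heta] at hE
    simp only [BitVec.getLsbD_or, BitVec.getLsbD_xor, Bool.or_eq_false_iff] at hE
    obtain ⟨⟨hchi, hpi⟩, hqi⟩ := hE
    have hxi : x.getLsbD i = Pv.getLsbD i := by
      have := hxb ⟨i, hi⟩; rwa [hpi, Bool.not_false, Bool.and_true] at this
    have hyi : y.getLsbD i = Qv.getLsbD i := by
      have := hyb ⟨i, hi⟩; rwa [hqi, Bool.not_false, Bool.and_true] at this
    have B0 : ∀ a b : Bool, (a ^^ b) = false → a = b := by decide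
    have B1 : ∀ a b c d : Bool, (a ^^ (b ^^ c)) = (a ^^ (b ^^ d)) → c = d := by decide
    have B2 : ∀ c d h : Bool, (d = true → c = true) → (c = true → h = true) → h = d → c = d := by
      decide
    have e2 : (sv + sm).getLsbD i
        = ((Pv ||| p).getLsbD i ^^ ((Qv ||| q).getLsbD i ^^ BitVec.carry i (Pv ||| p) (Qv ||| q) false)) := by
      rw [← hXY]; exact BitVec.getLsbD_add hi _ _
    have e3 : sv.getLsbD i = (Pv.getLsbD i ^^ (Qv.getLsbD i ^^ BitVec.carry i Pv Qv false)) :=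
      BitVec.getLsbD_add hi Pv Qv
    have e5 : (x + y).getLsbD i = (x.getLsbD i ^^ (y.getLsbD i ^^ BitVec.carry i x y false)) :=
      BitVec.getLsbD_add hi x y
    have hsum : (sv + sm).getLsbD i = sv.getLsbD i := B0 _ _ hchi
    have hhd : BitVec.carry i (Pv ||| p) (Qv ||| q) false = BitVec.carry i Pv Qv false := by
      rw [hsum, e3] at e2
      simp only [BitVec.getLsbD_or, hpi, hqi, Bool.or_false] at e2
      exact B1 _ _ _ _ e2.symm
    have m1 := carry_mono' i Pv x Qv y s1 t1
    have m2 := carry_mono' i x (Pv ||| p) y (Qv ||| q) s2 t2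
    have hcd : BitVec.carry i x y false = BitVec.carry i Pv Qv false :=
      B2 _ _ _ m1 m2 hhd
    rw [e5, e3, hxi, hyi, hcd]
  · simp
end

section
/- Minimum carries lemma: for well-formed tnums P, Q and any x ∈ γ(P), y ∈ γ(Q), the carry sequence of the n-bit addition P.v + Q.v is bitwise dominated by the carry sequence of x + y; that is, for every bit position i, if the carry into position i in computing P.v + Q.v is 1, then the carry into position i in computing x + y is also 1. -/
/-- Carry into bit position `i` of the addition `a + b`. -/
def carryIn {n : ℕ} (a b : BitVec n) : ℕ → Bool
  | 0 => false
  | i + 1 => (a.getLsbD i && b.getLsbD i) || (carryIn a b i && (a.getLsbD i ^^ b.getLsbD i))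

theorem stmt9 {n : ℕ} (P Q : Tnum n) (hP : Tnum.wf P) (hQ : Tnum.wf Q)
    (x y : BitVec n) (hx : x ∈ Tnum.gamma P) (hy : y ∈ Tnum.gamma Q)
    (i : ℕ) (hi : i < n) (h : carryIn P.1 Q.1 i = true) :
    carryIn x y i = true := by
  have hx' : x &&& ~~~P.2 = P.1 := hx
  have hy' : y &&& ~~~Q.2 = Q.1 := hy
  have hxb : ∀ j, P.1.getLsbD j = true → x.getLsbD j = true := by
    intro j hj
    have h2 := congrArg (fun z => z.getLsbD j) hx'
    simp only [BitVec.getLsbD_and, BitVec.getLsbD_not, hj, Bool.and_eq_true] at h2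
    exact h2.1
  have hyb : ∀ j, Q.1.getLsbD j = true → y.getLsbD j = true := by
    intro j hj
    have h2 := congrArg (fun z => z.getLsbD j) hy'
    simp only [BitVec.getLsbD_and, BitVec.getLsbD_not, hj, Bool.and_eq_true] at h2
    exact h2.1
  clear hi
  induction i with
  | zero => simp [carryIn] at h
  | succ k ih =>
    simp only [carryIn, Bool.or_eq_true, Bool.and_eq_true] at h ⊢
    rcases h with ⟨h1, h2⟩ | ⟨hc, hx2⟩
    · exact Or.inl ⟨hxb k h1, hyb k h2⟩
    · have hc' := ih hc
      cases hp : P.1.getLsbD k with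
      | true =>
        have hx1 := hxb k hp
        cases hyk : y.getLsbD k with
        | true => exact Or.inl ⟨hx1, rfl⟩
        | false => exact Or.inr ⟨hc', by simp [hx1]⟩
      | false =>
        rw [hp] at hx2; simp at hx2
        have hy1 := hyb k hx2
        cases hxk : x.getLsbD k with
        | true => exact Or.inl ⟨rfl, hy1⟩
        | false => exact Or.inr ⟨hc', by simp [hy1]⟩
end

section
/- Maximum carries lemma: for well-formed tnums P, Q and any x ∈ γ(P), y ∈ γ(Q), the carry sequence of the addition (P.v + P.m) + (Q.v + Q.m) bitwise dominates the carry sequence of x + y; that is, for every bit position i, if the carry into position i of x + y is 1, then the carry into position i of (P.v+P.m) + (Q.v+Q.m) is also 1. -/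
/-- Numeric characterization of the carry into bit `i`. -/
theorem carryIn_iff {n : ℕ} (a b : BitVec n) (i : ℕ) :
    carryIn a b i = decide (2^i ≤ a.toNat % 2^i + b.toNat % 2^i) := by
  induction i with
  | zero => simp [carryIn, Nat.mod_one]
  | succ i ih =>
    have hA : a.toNat % 2^(i+1) = a.toNat % 2^i + 2^i * (a.toNat / 2^i % 2) :=
      Nat.mod_pow_succ
    have hB : b.toNat % 2^(i+1) = b.toNat % 2^i + 2^i * (b.toNat / 2^i % 2) :=
      Nat.mod_pow_succ
    have hga : a.getLsbD i = decide (a.toNat / 2^i % 2 = 1) := by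
      rw [BitVec.getLsbD, Nat.testBit_eq_decide_div_mod_eq]
    have hgb : b.getLsbD i = decide (b.toNat / 2^i % 2 = 1) := by
      rw [BitVec.getLsbD, Nat.testBit_eq_decide_div_mod_eq]
    have hma : a.toNat % 2^i < 2^i := Nat.mod_lt _ (Nat.two_pow_pos i)
    have hmb : b.toNat % 2^i < 2^i := Nat.mod_lt _ (Nat.two_pow_pos i)
    rw [carryIn, ih, hA, hB, hga, hgb, pow_succ]
    rcases (by omega : a.toNat / 2^i % 2 = 0 ∨ a.toNat / 2^i % 2 = 1) with h | h <;>
    rcases (by omega : b.toNat / 2^i % 2 = 0 ∨ b.toNat / 2^i % 2 = 1) with h' | h' <;>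
      simp [h, h'] <;> omega

theorem bit_subset {n} (P : Tnum n) (hP : P.1 &&& P.2 = 0#n) (x : BitVec n)
    (hx : x &&& ~~~P.2 = P.1) (j : ℕ) (hj : x.getLsbD j = true) :
    (P.1 + P.2).getLsbD j = true := by
  have hs : P.1 + P.2 = P.1 ||| P.2 := BitVec.add_eq_or_of_and_eq_zero _ _ hP
  have hjn : j < n := BitVec.lt_of_getLsbD hj
  rw [hs, BitVec.getLsbD_or]
  have := congrArg (fun z => z.getLsbD j) hx
  simp only [BitVec.getLsbD_and, BitVec.getLsbD_not, hj, decide_eq_true hjn] at this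
  cases h2 : P.2.getLsbD j <;> simp [h2] at this <;> simp [this, h2]

theorem mod_le_of_subset {x s : ℕ} (hsub : ∀ j, x.testBit j = true → s.testBit j = true)
    (i : ℕ) : x % 2^i ≤ s % 2^i := by
  have : x % 2^i = (x % 2^i) &&& (s % 2^i) := by
    apply Nat.eq_of_testBit_eq
    intro j
    simp only [Nat.testBit_and, Nat.testBit_mod_two_pow]
    cases hj : x.testBit j
    · simp
    · simp [hsub j hj]
  rw [this]; exact Nat.and_le_right

theorem stmt10 {n : ℕ} (P Q : Tnum n) (hP : Tnum.wf P) (hQ : Tnum.wf Q)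
    (x y : BitVec n) (hx : x ∈ Tnum.gamma P) (hy : y ∈ Tnum.gamma Q)
    (i : ℕ) (hi : i < n) (h : carryIn x y i = true) :
    carryIn (P.1 + P.2) (Q.1 + Q.2) i = true := by
  rw [carryIn_iff] at h ⊢
  rw [decide_eq_true_iff] at h ⊢
  have h1 : x.toNat % 2^i ≤ (P.1 + P.2).toNat % 2^i :=
    mod_le_of_subset (fun j hj => bit_subset P hP x hx j hj) i
  have h2 : y.toNat % 2^i ≤ (Q.1 + Q.2).toNat % 2^i :=
    mod_le_of_subset (fun j hj => bit_subset Q hQ y hy j hj) i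
  omega
end

section
/- Equivalence of mask expressions: with sv = P.v + Q.v, Σ = (P.v + P.m) + (Q.v + Q.m), and sv_c, Σ_c the carry-in bit sequences of those two additions respectively, we have (sv ^^^ Σ) ||| P.m ||| Q.m = (sv_c ^^^ Σ_c) ||| P.m ||| Q.m, for any well-formed tnums P, Q. -/
lemma carryIn_eq_carry {n : ℕ} (a b : BitVec n) (i : ℕ) :
    carryIn a b i = BitVec.carry i a b false := by
  induction i with
  | zero => simp [carryIn]
  | succ i ih =>
    rw [BitVec.carry_succ, carryIn, ih]
    cases a.getLsbD i <;> cases b.getLsbD i <;> cases BitVec.carry i a b false <;> rfl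

lemma carry_disjoint {n : ℕ} (a b : BitVec n) (h : a &&& b = 0#n) (i : ℕ) :
    BitVec.carry i a b false = false := by
  induction i with
  | zero => simp
  | succ i ih =>
    have hb := congrArg (fun x => x.getLsbD i) h
    simp only [BitVec.getLsbD_and, BitVec.getLsbD_zero] at hb
    rw [BitVec.carry_succ, ih]
    cases ha : a.getLsbD i <;> cases hbb : b.getLsbD i <;> simp_all

theorem stmt11 {n : ℕ} (P Q : Tnum n) (hP : Tnum.wf P) (hQ : Tnum.wf Q)
    (svc sigmac : BitVec n)
    (hsvc : ∀ i, i < n → svc.getLsbD i = carryIn P.1 Q.1 i)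
    (hsigmac : ∀ i, i < n → sigmac.getLsbD i = carryIn (P.1 + P.2) (Q.1 + Q.2) i) :
    ((P.1 + Q.1) ^^^ ((P.1 + P.2) + (Q.1 + Q.2))) ||| P.2 ||| Q.2
      = (svc ^^^ sigmac) ||| P.2 ||| Q.2 := by
  ext i
  have hi : (i : ℕ) < n := by assumption
  simp only [BitVec.getLsbD_or, BitVec.getLsbD_xor, BitVec.getLsbD_add hi,
    BitVec.getLsbD_eq_getElem, BitVec.getElem_or, BitVec.getElem_xor]
  simp only [← BitVec.getLsbD_eq_getElem hi, BitVec.getLsbD_add hi]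
  have h1 := hsvc i hi
  have h2 := hsigmac i hi
  rw [carryIn_eq_carry] at h1 h2
  rw [h1, h2, carry_disjoint P.1 P.2 hP, carry_disjoint Q.1 Q.2 hQ]
  cases P.1.getLsbD i <;> cases P.2.getLsbD i <;> cases Q.1.getLsbD i <;>
    cases Q.2.getLsbD i <;> cases BitVec.carry i P.1 Q.1 false <;>
    cases BitVec.carry i (P.1 + P.2) (Q.1 + Q.2) false <;> rfl
end

section
/- Optimality of tnum_add: for well-formed tnums P, Q with R = tnum_add(P, Q), and for every bit position k where R's mask bit is 1, there exist x₁, x₂ ∈ γ(P) and y₁, y₂ ∈ γ(Q) such that bit k of x₁ + y₁ differs from bit k of x₂ + y₂. -/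
lemma flipBit {n k : ℕ} (h : k < n) (z : BitVec n) :
    (z + BitVec.twoPow n k).getLsbD k = ! z.getLsbD k := by
  simp only [BitVec.getLsbD, BitVec.toNat_add, BitVec.toNat_twoPow,
    Nat.testBit_mod_two_pow, h, decide_true, Bool.true_and]
  rw [Nat.mod_eq_of_lt (Nat.pow_lt_pow_right (by norm_num) h)]
  rw [Nat.testBit_eq_decide_div_mod_eq, Nat.testBit_eq_decide_div_mod_eq,
    Nat.add_div_right _ (Nat.two_pow_pos k)]
  rcases Nat.mod_two_eq_zero_or_one (z.toNat / 2 ^ k) with h1 | h1 <;> simp [h1, Nat.add_mod]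

lemma bit_of_wf {n : ℕ} {P : Tnum n} (hP : Tnum.wf P) (i : ℕ) :
    P.1.getLsbD i = true → P.2.getLsbD i = false := by
  intro h1
  have := congrArg (fun z => z.getLsbD i) hP
  simpa [h1] using this

lemma tn_val_mem {n : ℕ} {P : Tnum n} (hP : Tnum.wf P) : P.1 ∈ Tnum.gamma P := by
  simp only [Tnum.gamma, Set.mem_setOf_eq]
  apply BitVec.eq_of_getLsbD_eq
  intro i hi
  simp only [BitVec.getLsbD_and, BitVec.getLsbD_not]
  rcases h1 : P.1.getLsbD i with _ | _
  · simp
  · simp [bit_of_wf hP i h1, hi, -BitVec.getLsbD_eq_getElem]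

lemma tn_sum_mem {n : ℕ} {P : Tnum n} (hP : Tnum.wf P) : P.1 + P.2 ∈ Tnum.gamma P := by
  simp only [Tnum.gamma, Set.mem_setOf_eq]
  rw [BitVec.add_eq_or_of_and_eq_zero _ _ hP]
  apply BitVec.eq_of_getLsbD_eq
  intro i hi
  simp only [BitVec.getLsbD_and, BitVec.getLsbD_not, BitVec.getLsbD_or]
  rcases h1 : P.1.getLsbD i with _ | _ <;>
  rcases h2 : P.2.getLsbD i with _ | _ <;>
    simp_all [hi, bit_of_wf hP i, -BitVec.getLsbD_eq_getElem]

lemma tn_xor_mem {n : ℕ} {P : Tnum n} (hP : Tnum.wf P) {k : ℕ} (hk : k < n)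
    (hm : P.2.getLsbD k = true) : P.1 + BitVec.twoPow n k ∈ Tnum.gamma P := by
  have hz : P.1 &&& BitVec.twoPow n k = 0#n := by
    apply BitVec.eq_of_getLsbD_eq
    intro i hi
    simp only [BitVec.getLsbD_and, BitVec.getLsbD_twoPow]
    by_cases hik : i = k
    · subst hik
      rcases h1 : P.1.getLsbD i with _ | _
      · simp
      · exact absurd hm (by simp [bit_of_wf hP i h1])
    · have hne : k ≠ (i : ℕ) := fun h => hik h.symm
      simp [hne]
  simp only [Tnum.gamma, Set.mem_setOf_eq]
  rw [BitVec.add_eq_or_of_and_eq_zero _ _ hz]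
  apply BitVec.eq_of_getLsbD_eq
  intro i hi
  simp only [BitVec.getLsbD_and, BitVec.getLsbD_not, BitVec.getLsbD_or,
    BitVec.getLsbD_twoPow]
  by_cases hik : i = k
  · subst hik
    have h1 : P.1.getLsbD i = false := by
      rcases h1 : P.1.getLsbD i with _ | _
      · rfl
      · exact absurd hm (by simp [bit_of_wf hP i h1])
    simp [h1, hm, hk, -BitVec.getLsbD_eq_getElem]
  · have hne : ¬ (k = i) := fun h => hik h.symm
    rcases h1 : P.1.getLsbD i with _ | _
    · simp [h1, hne]
    · simp [h1, hne, bit_of_wf hP i h1, hi, -BitVec.getLsbD_eq_getElem]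

theorem stmt12 {n : ℕ} (P Q : Tnum n) (hP : Tnum.wf P) (hQ : Tnum.wf Q)
    (k : ℕ) (hk : k < n) (h : (tnumAdd P Q).2.getLsbD k = true) :
    ∃ x₁ ∈ Tnum.gamma P, ∃ x₂ ∈ Tnum.gamma P, ∃ y₁ ∈ Tnum.gamma Q, ∃ y₂ ∈ Tnum.gamma Q,
      (x₁ + y₁).getLsbD k ≠ (x₂ + y₂).getLsbD k := by
  simp only [tnumAdd, BitVec.getLsbD_or, Bool.or_eq_true] at h
  rcases h with (hchi | hpm) | hqm
  · -- chi bit set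
    refine ⟨P.1, tn_val_mem hP, P.1 + P.2, tn_sum_mem hP, Q.1, tn_val_mem hQ,
      Q.1 + Q.2, tn_sum_mem hQ, ?_⟩
    have heq : P.1 + P.2 + (Q.1 + Q.2) = P.1 + Q.1 + (P.2 + Q.2) := by ring
    rw [heq]
    simp only [BitVec.getLsbD_xor] at hchi
    intro hc
    rw [hc] at hchi
    simp at hchi
  · -- P mask bit set
    refine ⟨P.1, tn_val_mem hP, P.1 + BitVec.twoPow n k, tn_xor_mem hP hk hpm,
      Q.1, tn_val_mem hQ, Q.1, tn_val_mem hQ, ?_⟩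
    have heq : P.1 + BitVec.twoPow n k + Q.1 = P.1 + Q.1 + BitVec.twoPow n k := by ring
    rw [heq, flipBit hk]
    simp
  · -- Q mask bit set
    refine ⟨P.1, tn_val_mem hP, P.1, tn_val_mem hP, Q.1, tn_val_mem hQ,
      Q.1 + BitVec.twoPow n k, tn_xor_mem hQ hk hqm, ?_⟩
    have heq : P.1 + (Q.1 + BitVec.twoPow n k) = P.1 + Q.1 + BitVec.twoPow n k := by ring
    rw [heq, flipBit hk]
    simp
end

section
/- Value-mask-decomposed tnum summation (binary case): let T₁ = (v₁, m₁) and T₂ = (v₂, m₂) be well-formed tnums, and let S = tnum_add(tnum_add((v₁,0),(v₂,0)), tnum_add((0,m₁),(0,m₂))). Then for any z₁ ∈ γ(T₁) and z₂ ∈ γ(T₂), z₁ + z₂ ∈ γ(S). -/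
/-- Invariant on the four carry chains: carry of `x+y`, carry of `v₁+v₂`,
carry of `m₁+m₂`, and carry of `sv+sm`. -/
def TInv (c c' μ ρ : Bool) : Bool :=
  (!c && !c' && !(μ && ρ)) || (c && !c' && (μ ^^ ρ)) || (c && c' && !μ && !ρ)

open BitVec Bool in
lemma tnumAdd_sound {n : ℕ} (v₁ m₁ v₂ m₂ : BitVec n) (x y : BitVec n)
    (hx : x ∈ Tnum.gamma (v₁, m₁)) (hy : y ∈ Tnum.gamma (v₂, m₂)) :
    x + y ∈ Tnum.gamma (tnumAdd (v₁, m₁) (v₂, m₂)) := by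
  simp only [Tnum.gamma, Set.mem_setOf_eq] at hx hy
  have hv1 : ∀ i, v₁.getLsbD i = (x.getLsbD i && !m₁.getLsbD i) := by
    intro i
    by_cases h : i < n
    · rw [← hx]; simp [h]
    · simp [BitVec.getLsbD_of_ge _ _ (Nat.le_of_not_lt h)]
  have hv2 : ∀ i, v₂.getLsbD i = (y.getLsbD i && !m₂.getLsbD i) := by
    intro i
    by_cases h : i < n
    · rw [← hy]; simp [h]
    · simp [BitVec.getLsbD_of_ge _ _ (Nat.le_of_not_lt h)]
  have inv : ∀ i, TInv (carry i x y false) (carry i v₁ v₂ false)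
      (carry i m₁ m₂ false) (carry i (v₁ + v₂) (m₁ + m₂) false) = true := by
    intro i
    induction i with
    | zero => simp [TInv]
    | succ i ih =>
      rw [carry_succ, carry_succ, carry_succ, carry_succ]
      by_cases hi : i < n
      · rw [getLsbD_add hi, getLsbD_add hi, hv1 i, hv2 i]
        revert ih
        generalize x.getLsbD i = xb
        generalize y.getLsbD i = yb
        generalize m₁.getLsbD i = m1b
        generalize m₂.getLsbD i = m2b
        generalize carry i x y false = c
        generalize carry i v₁ v₂ false = c'
        generalize carry i m₁ m₂ false = μ
        generalize carry i (v₁ + v₂) (m₁ + m₂) false = ρ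
        revert xb yb m1b m2b c c' μ ρ
        decide
      · simp [BitVec.getLsbD_of_ge _ _ (Nat.le_of_not_lt hi), TInv, atLeastTwo]
  simp only [Tnum.gamma, tnumAdd, Set.mem_setOf_eq]
  apply BitVec.eq_of_getLsbD_eq; intro i hi
  simp only [getLsbD_and, getLsbD_not, getLsbD_or, getLsbD_xor, hi]
  simp only [decide_eq_true_eq, hi, if_true, decide_true] <;> try rfl
  simp only [show decide (i < n) = true from by simp [hi], Bool.true_and]
  rw [getLsbD_add hi x y, getLsbD_add hi (v₁ + v₂) (m₁ + m₂),
    getLsbD_add hi v₁ v₂, getLsbD_add hi m₁ m₂, hv1 i, hv2 i]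
  have H := inv i
  revert H
  generalize x.getLsbD i = xb
  generalize y.getLsbD i = yb
  generalize m₁.getLsbD i = m1b
  generalize m₂.getLsbD i = m2b
  generalize carry i x y false = c
  generalize carry i v₁ v₂ false = c'
  generalize carry i m₁ m₂ false = μ
  generalize carry i (v₁ + v₂) (m₁ + m₂) false = ρ
  revert xb yb m1b m2b c c' μ ρ
  decide

theorem stmt15 {n : ℕ} (v₁ m₁ v₂ m₂ : BitVec n)
    (h₁ : Tnum.wf (v₁, m₁)) (h₂ : Tnum.wf (v₂, m₂))
    (z₁ z₂ : BitVec n) (hz₁ : z₁ ∈ Tnum.gamma (v₁, m₁)) (hz₂ : z₂ ∈ Tnum.gamma (v₂, m₂)) :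
    z₁ + z₂ ∈ Tnum.gamma
      (tnumAdd (tnumAdd (v₁, 0#n) (v₂, 0#n)) (tnumAdd (0#n, m₁) (0#n, m₂))) := by
  simp only [Tnum.gamma, Set.mem_setOf_eq] at hz₁ hz₂
  -- decompose z₁ = v₁ + (z₁ &&& m₁), z₂ = v₂ + (z₂ &&& m₂)
  have hd1 : v₁ &&& (z₁ &&& m₁) = 0#n := by
    rw [← hz₁]; ext i; simp; tauto
  have hd2 : v₂ &&& (z₂ &&& m₂) = 0#n := by
    rw [← hz₂]; ext i; simp; tauto
  have e1 : z₁ = v₁ + (z₁ &&& m₁) := by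
    rw [BitVec.add_eq_or_of_and_eq_zero _ _ hd1, ← hz₁]
    ext i; simp
    cases z₁[i] <;> cases m₁[i] <;> simp
  have e2 : z₂ = v₂ + (z₂ &&& m₂) := by
    rw [BitVec.add_eq_or_of_and_eq_zero _ _ hd2, ← hz₂]
    ext i; simp
    cases z₂[i] <;> cases m₂[i] <;> simp
  have key : z₁ + z₂ = (v₁ + v₂) + ((z₁ &&& m₁) + (z₂ &&& m₂)) := by
    conv_lhs => rw [e1, e2]
    ring
  rw [key]
  -- the first tnum in the outer sum is (v₁ + v₂, 0), the second is (0, η')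
  have hA : tnumAdd (v₁, 0#n) (v₂, 0#n) = (v₁ + v₂, 0#n) := by
    simp [tnumAdd]
  have hB2 : (tnumAdd (0#n, m₁) (0#n, m₂)).1 = 0#n := by
    simp [tnumAdd]
  have memA : v₁ + v₂ ∈ Tnum.gamma (tnumAdd (v₁, 0#n) (v₂, 0#n)) := by
    rw [hA]; simp [Tnum.gamma]
  have memB : (z₁ &&& m₁) + (z₂ &&& m₂) ∈ Tnum.gamma (tnumAdd (0#n, m₁) (0#n, m₂)) := by
    apply tnumAdd_sound <;>
      · simp only [Tnum.gamma, Set.mem_setOf_eq]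
        ext i; simp
  -- rewrite the two inner tnums as explicit pairs and apply soundness
  have := tnumAdd_sound (tnumAdd (v₁, 0#n) (v₂, 0#n)).1 (tnumAdd (v₁, 0#n) (v₂, 0#n)).2
    (tnumAdd (0#n, m₁) (0#n, m₂)).1 (tnumAdd (0#n, m₁) (0#n, m₂)).2
    (v₁ + v₂) ((z₁ &&& m₁) + (z₂ &&& m₂)) memA memB
  simpa using this
end

section
/- Soundness of tnum left shift: for a well-formed tnum P = (v, m), a shift amount k, and any x ∈ γ(P), the shifted value x <<< k is in γ(v <<< k, m <<< k). -/
theorem stmt17 {n : ℕ} (v m : BitVec n) (hwf : Tnum.wf (v, m)) (k : ℕ)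
    (x : BitVec n) (hx : x ∈ Tnum.gamma (v, m)) :
    x <<< k ∈ Tnum.gamma (v <<< k, m <<< k) := by
  simp only [Tnum.gamma, Set.mem_setOf_eq] at hx ⊢
  apply BitVec.eq_of_getLsbD_eq; intro i hi
  simp only [BitVec.getLsbD_and, BitVec.getLsbD_not, BitVec.getLsbD_shiftLeft]
  have := congrArg (fun b => b.getLsbD (i - k)) hx
  simp only [BitVec.getLsbD_and, BitVec.getLsbD_not] at this
  by_cases h : (i:ℕ) < k
  · simp [h]
  · have hn : ((i:ℕ) - k) < n := by omega
    simp [h, hn, hi] at this ⊢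
    tauto
end
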